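/- If A is a P-Frobenius algebra over k and B is a Q-Frobenius algebra over k, then the tensor product algebra A ⊗_k B is a (P ⊗_k Q)-Frobenius algebra. -/

import Mathlib

open scoped TensorProduct

def IsInvertibleModule (k P : Type*) [CommRing k] [AddCommGroup P] [Module k P] : Prop :=
  Module.Finite k P ∧ Module.Projective k P ∧ Function.Bijective (contractRight k P)

/-- `A` is a `P`-Frobenius `k`-algebra: finitely generated projective over `k` and
`A ≅ Hom_k(A,P)` as right `A`-modules, where `(f·a)(x) = f(ax)`. -/
def IsPFrobeniusAlgebra (k A P : Type*) [CommRing k] [Ring A] [Algebra k A]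
    [AddCommGroup P] [Module k P] : Prop :=
  Module.Finite k A ∧ Module.Projective k A ∧
    ∃ Φ : A ≃ₗ[k] (A →ₗ[k] P), ∀ a x z : A, Φ (x * a) z = Φ x (a * z)

/-! For finite projective `A` and `B` the canonical map `Hom(A, P) ⊗ Hom(B, Q) → Hom(A ⊗ B, P ⊗ Q)`
is an isomorphism, so the tensor product of the two Frobenius isomorphisms is again one; it is
right `A ⊗ B`-linear because that identity is trilinear and holds on pure tensors. -/

namespace TensorProduct

variable {k A B P Q : Type*} [CommSemiring k] [Semiring A] [Algebra k A] [Semiring B]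
  [Algebra k B] [AddCommMonoid P] [Module k P] [AddCommMonoid Q] [Module k Q]

theorem homTensorHomMap_map_mul_apply {ΦA : A →ₗ[k] A →ₗ[k] P} {ΦB : B →ₗ[k] B →ₗ[k] Q}
    (hA : ∀ a x z : A, ΦA (x * a) z = ΦA x (a * z))
    (hB : ∀ a x z : B, ΦB (x * a) z = ΦB x (a * z)) (a x z : A ⊗[k] B) :
    homTensorHomMap (.id k) A B P Q (map ΦA ΦB (x * a)) z =
      homTensorHomMap (.id k) A B P Q (map ΦA ΦB x) (a * z) := by
  induction a using TensorProduct.induction_on with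
  | zero => simp
  | add a a' ha ha' => simp only [mul_add, add_mul, map_add, LinearMap.add_apply, ha, ha']
  | tmul a₁ a₂ =>
    induction x using TensorProduct.induction_on with
    | zero => simp
    | add x x' hx hx' => simp only [add_mul, map_add, LinearMap.add_apply, hx, hx']
    | tmul x₁ x₂ =>
      induction z using TensorProduct.induction_on with
      | zero => simp
      | add z z' hz hz' => simp only [mul_add, map_add, hz, hz']
      | tmul z₁ z₂ => simp [hA, hB]

end TensorProduct

theorem tensorProduct_pFrobenius (k A B P Q : Type*) [CommRing k]
    [Ring A] [Algebra k A] [Ring B] [Algebra k B]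
    [AddCommGroup P] [Module k P] [AddCommGroup Q] [Module k Q]
    (hA : IsPFrobeniusAlgebra k A P) (hB : IsPFrobeniusAlgebra k B Q) :
    IsPFrobeniusAlgebra k (A ⊗[k] B) (P ⊗[k] Q) := by
  obtain ⟨_, _, ΦA, hΦA⟩ := hA
  obtain ⟨_, _, ΦB, hΦB⟩ := hB
  refine ⟨inferInstance, inferInstance,
    (TensorProduct.congr ΦA ΦB).trans (homTensorHomEquiv k A B P Q), fun a x z => ?_⟩
  simp only [LinearEquiv.trans_apply, homTensorHomEquiv_apply]
  exact TensorProduct.homTensorHomMap_map_mul_apply (ΦA := ΦA.toLinearMap) (ΦB := ΦB.toLinearMap)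
    hΦA hΦB a x z
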